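/- The function g is continuously differentiable on ℝ (in particular the one-sided derivatives of the two branches agree at s = (αk)^{−1/2}), and g is strictly decreasing on (0, ∞) and strictly increasing on (−∞, 0). -/

import Mathlib

open Real Filter Set

/-- The constant α = (9+3√5)/2. -/
noncomputable def alph : ℝ := (9 + 3 * Real.sqrt 5) / 2

/-- The constant β = 2 α^{3/2} √(α−1). -/
noncomputable def bet : ℝ := 2 * alph ^ ((3 : ℝ) / 2) * Real.sqrt (alph - 1)

/-- The change-of-variable function g (extended evenly to negative arguments):
g(s) = √(1 − k s²) for |s| < (αk)^{−1/2}, and g(s) = 1/(βk s²) + √3/2 for |s| ≥ (αk)^{−1/2}. -/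
noncomputable def g (k s : ℝ) : ℝ :=
  if |s| < 1 / Real.sqrt (alph * k) then Real.sqrt (1 - k * s ^ 2)
  else 1 / (bet * k * s ^ 2) + Real.sqrt 3 / 2

/-- G(t) = ∫₀ᵗ g(s) ds. -/
noncomputable def G (k t : ℝ) : ℝ := ∫ s in (0 : ℝ)..t, g k s

/-!
At `s₀ = (αk)^{-1/2}`, where `k s₀² = 1/α`, the two branches of `g` meet with equal slopes
because `β/α² = 2√(1 - 1/α)` (this is the definition of `β`), and with equal values because
`α² = 9α - 9`, which turns `√3 √α √(α-1)` into `2α - 3`. Gluing the two branches along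
`|s| = s₀` therefore gives a `C¹` function whose derivative is negative for `s > 0`; the
statement on `(-∞, 0)` follows since `g` is even.
-/

theorem hasDerivAt_of_eqOn_of_union_eq_univ {𝕜 F : Type*} [NontriviallyNormedField 𝕜]
    [NormedAddCommGroup F] [NormedSpace 𝕜 F] {f u v : 𝕜 → F} {s t : Set 𝕜} {x : 𝕜}
    {d : F} (hst : s ∪ t = univ) (hu : HasDerivAt u d x) (hv : HasDerivAt v d x)
    (hfu : EqOn f u s) (hfv : EqOn f v t) (hxs : x ∈ s) (hxt : x ∈ t) : HasDerivAt f d x := by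
  have h := (hu.hasDerivWithinAt.congr_of_mem (fun y hy => hfu hy) hxs).union
    (hv.hasDerivWithinAt.congr_of_mem (fun y hy => hfv hy) hxt)
  rwa [hst, hasDerivWithinAt_univ] at h

theorem hasDerivAt_sqrt_one_sub_mul_sq (k : ℝ) {s : ℝ} (hs : 0 < 1 - k * s ^ 2) :
    HasDerivAt (fun s : ℝ => √(1 - k * s ^ 2)) (-(k * s) / √(1 - k * s ^ 2)) s := by
  refine ((((hasDerivAt_pow 2 s).const_mul k).const_sub 1).sqrt hs.ne').congr_deriv ?_
  field_simp
  ring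

theorem hasDerivAt_one_div_mul_sq_add {c s : ℝ} (d : ℝ) (hc : c ≠ 0) (hs : s ≠ 0) :
    HasDerivAt (fun s : ℝ => 1 / (c * s ^ 2) + d) (-2 / (c * s ^ 3)) s := by
  refine (((hasDerivAt_const s (1 : ℝ)).fun_div ((hasDerivAt_pow 2 s).const_mul c)
    (by positivity)).add_const d).congr_deriv ?_
  field_simp
  ring

theorem seven_lt_alph : 7 < alph := by
  have : 2 < √5 := by
    nlinarith [Real.sq_sqrt (show (0 : ℝ) ≤ 5 by norm_num), Real.sqrt_nonneg 5]
  unfold alph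
  linarith

theorem alph_sq : alph ^ 2 = 9 * alph - 9 := by
  unfold alph
  nlinarith [Real.sq_sqrt (show (0 : ℝ) ≤ 5 by norm_num)]

theorem bet_eq : bet = 2 * alph * √alph * √(alph - 1) := by
  rw [bet, show (3 : ℝ) / 2 = 1 + 1 / 2 by norm_num, Real.rpow_add (by linarith [seven_lt_alph]),
    Real.rpow_one, ← Real.sqrt_eq_rpow]
  ring

theorem bet_pos : 0 < bet := by
  have := seven_lt_alph
  have : 0 < √(alph - 1) := Real.sqrt_pos.2 (by linarith)
  rw [bet_eq]
  positivity

theorem sqrt_one_sub_inv_alph : √(1 - 1 / alph) = √(alph - 1) / √alph := by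
  have := seven_lt_alph
  rw [← Real.sqrt_div' _ (by linarith), sub_div, div_self (by linarith)]

theorem sqrt_three_mul_sqrt_alph_mul_sqrt_alph_sub_one :
    √3 * √alph * √(alph - 1) = 2 * alph - 3 := by
  have := seven_lt_alph
  rw [← Real.sqrt_mul (by norm_num), ← Real.sqrt_mul (by positivity),
    show 3 * alph * (alph - 1) = (2 * alph - 3) ^ 2 by nlinarith [alph_sq],
    Real.sqrt_sq (by linarith)]

section

variable {k s : ℝ}

theorem one_div_bet_mul_sq_add_eq (h : k * s ^ 2 = 1 / alph) :
    1 / (bet * k * s ^ 2) + √3 / 2 = √(1 - k * s ^ 2) := by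
  have := seven_lt_alph
  have hB : √(alph - 1) ^ 2 = alph - 1 := Real.sq_sqrt (by linarith)
  have : 0 < √(alph - 1) := Real.sqrt_pos.2 (by linarith)
  rw [mul_assoc, h, sqrt_one_sub_inv_alph, bet_eq]
  field_simp
  linear_combination sqrt_three_mul_sqrt_alph_mul_sqrt_alph_sub_one - 2 * hB

theorem neg_mul_div_sqrt_eq (h : k * s ^ 2 = 1 / alph) :
    -(k * s) / √(1 - k * s ^ 2) = -2 / (bet * k * s ^ 3) := by
  have := seven_lt_alph
  have hk : k ≠ 0 := by rintro rfl; simp at h; linarith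
  have hs : s ≠ 0 := by rintro rfl; simp at h; linarith
  have hroot : 0 < √(1 - k * s ^ 2) :=
    Real.sqrt_pos.2 (by rw [h, sub_pos, div_lt_one (by linarith)]; linarith)
  have key : bet * (k * s ^ 2) ^ 2 = 2 * √(1 - k * s ^ 2) := by
    rw [h, sqrt_one_sub_inv_alph, bet_eq]
    field_simp
    rw [Real.sq_sqrt (by linarith)]
  have := bet_pos
  rw [div_eq_div_iff hroot.ne' (by positivity)]
  linear_combination -key

theorem mul_sq_one_div_sqrt (hk : 0 < k) : k * (1 / √(alph * k)) ^ 2 = 1 / alph := by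
  have := seven_lt_alph
  rw [div_pow, Real.sq_sqrt (by positivity)]
  field_simp

theorem mul_sq_eq_of_abs_eq (hk : 0 < k) (h : |s| = 1 / √(alph * k)) : k * s ^ 2 = 1 / alph := by
  rw [← sq_abs, h, mul_sq_one_div_sqrt hk]

theorem one_sub_mul_sq_pos (hk : 0 < k) (h : |s| ≤ 1 / √(alph * k)) : 0 < 1 - k * s ^ 2 := by
  have := seven_lt_alph
  have hs : k * s ^ 2 ≤ 1 / alph := by
    rw [← mul_sq_one_div_sqrt hk, ← sq_abs]
    gcongr
  have : 1 / alph < 1 := by rw [div_lt_one (by linarith)]; linarith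
  linarith

end

noncomputable def gDeriv (k s : ℝ) : ℝ :=
  if |s| ≤ 1 / √(alph * k) then -(k * s) / √(1 - k * s ^ 2) else -2 / (bet * k * s ^ 3)

section

variable {k : ℝ}

theorem hasDerivAt_g (hk : 0 < k) (s : ℝ) : HasDerivAt (g k) (gDeriv k s) s := by
  set r := 1 / √(alph * k)
  have hr : 0 < r := by have := seven_lt_alph; positivity
  have hu : ∀ x, |x| ≤ r →
      HasDerivAt (fun s : ℝ => √(1 - k * s ^ 2)) (-(k * x) / √(1 - k * x ^ 2)) x :=
    fun x hx => hasDerivAt_sqrt_one_sub_mul_sq k (one_sub_mul_sq_pos hk hx)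
  have hv : ∀ x, r ≤ |x| →
      HasDerivAt (fun s : ℝ => 1 / (bet * k * s ^ 2) + √3 / 2) (-2 / (bet * k * x ^ 3)) x :=
    fun x hx => hasDerivAt_one_div_mul_sq_add _ (mul_pos bet_pos hk).ne'
      (abs_pos.1 (hr.trans_le hx))
  have hgu : EqOn (g k) (fun s : ℝ => √(1 - k * s ^ 2)) {x | |x| ≤ r} := fun x hx => by
    rcases (show |x| ≤ r from hx).lt_or_eq with hlt | heq
    · exact if_pos hlt
    · rw [g, if_neg heq.not_lt]
      exact one_div_bet_mul_sq_add_eq (mul_sq_eq_of_abs_eq hk heq)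
  have hgv : EqOn (g k) (fun s : ℝ => 1 / (bet * k * s ^ 2) + √3 / 2) {x | r ≤ |x|} :=
    fun x hx => if_neg (not_lt.2 hx)
  rcases lt_trichotomy |s| r with hlt | heq | hgt
  · rw [gDeriv, if_pos hlt.le]
    refine (hu s hlt.le).congr_of_eventuallyEq (eventuallyEq_of_mem ?_ hgu)
    exact (continuous_abs.continuousAt.eventually_lt continuousAt_const hlt).mono
      fun _ => le_of_lt
  · rw [gDeriv, if_pos heq.le]
    refine hasDerivAt_of_eqOn_of_union_eq_univ ?_ (hu s heq.le) ?_ hgu hgv heq.le heq.ge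
    · ext x
      simp [le_total]
    · rw [neg_mul_div_sqrt_eq (mul_sq_eq_of_abs_eq hk heq)]
      exact hv s heq.ge
  · rw [gDeriv, if_neg hgt.not_ge]
    refine (hv s hgt.le).congr_of_eventuallyEq (eventuallyEq_of_mem ?_ hgv)
    exact (continuousAt_const.eventually_lt continuous_abs.continuousAt hgt).mono
      fun _ => le_of_lt

theorem continuous_gDeriv (hk : 0 < k) : Continuous (gDeriv k) := by
  refine continuous_if_le continuous_abs continuous_const ?_ ?_
    fun x hx => neg_mul_div_sqrt_eq (mul_sq_eq_of_abs_eq hk hx)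
  · exact ContinuousOn.div (by fun_prop) (by fun_prop)
      fun x hx => (Real.sqrt_pos.2 (one_sub_mul_sq_pos hk hx)).ne'
  · refine ContinuousOn.div (by fun_prop) (by fun_prop) fun x hx => ?_
    have hx : x ≠ 0 := by
      have := seven_lt_alph
      exact abs_pos.1 (lt_of_lt_of_le (by positivity) hx)
    have := bet_pos
    positivity

theorem gDeriv_neg_of_pos (hk : 0 < k) {s : ℝ} (hs : 0 < s) : gDeriv k s < 0 := by
  unfold gDeriv
  split_ifs with h
  · exact div_neg_of_neg_of_pos (neg_neg_of_pos (mul_pos hk hs))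
      (Real.sqrt_pos.2 (one_sub_mul_sq_pos hk h))
  · have := bet_pos
    exact div_neg_of_neg_of_pos (by norm_num) (by positivity)

theorem g_neg (k s : ℝ) : g k (-s) = g k s := by
  simp only [g, abs_neg, neg_sq]

theorem strictAntiOn_g (hk : 0 < k) : StrictAntiOn (g k) (Ioi 0) := by
  refine strictAntiOn_of_deriv_neg (convex_Ioi 0)
    (fun x _ => (hasDerivAt_g hk x).continuousAt.continuousWithinAt) fun x hx => ?_
  rw [interior_Ioi] at hx
  rw [(hasDerivAt_g hk x).deriv]
  exact gDeriv_neg_of_pos hk hx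

theorem strictMonoOn_g (hk : 0 < k) : StrictMonoOn (g k) (Iio 0) := fun a ha b hb hab => by
  rw [← g_neg k a, ← g_neg k b]
  exact strictAntiOn_g hk (neg_pos.2 (mem_Iio.1 hb)) (neg_pos.2 (mem_Iio.1 ha))
    (neg_lt_neg hab)

end

/-- g is continuously differentiable on ℝ (in particular the derivatives of the two
branches match at s = (αk)^{−1/2}), strictly decreasing on (0, ∞) and strictly
increasing on (−∞, 0). -/
theorem stmt2 (k : ℝ) (hk : 0 < k) :
    ContDiff ℝ 1 (g k) ∧
    (HasDerivAt (fun s : ℝ => Real.sqrt (1 - k * s ^ 2))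
        (deriv (g k) (1 / Real.sqrt (alph * k))) (1 / Real.sqrt (alph * k)) ∧
      HasDerivAt (fun s : ℝ => 1 / (bet * k * s ^ 2) + Real.sqrt 3 / 2)
        (deriv (g k) (1 / Real.sqrt (alph * k))) (1 / Real.sqrt (alph * k))) ∧
    StrictAntiOn (g k) (Set.Ioi 0) ∧
    StrictMonoOn (g k) (Set.Iio 0) := by
  have hderiv : deriv (g k) = gDeriv k := funext fun s => (hasDerivAt_g hk s).deriv
  have hr : |1 / √(alph * k)| = 1 / √(alph * k) :=
    abs_of_pos (by have := seven_lt_alph; positivity)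
  have hjunction : gDeriv k (1 / √(alph * k))
      = -(k * (1 / √(alph * k))) / √(1 - k * (1 / √(alph * k)) ^ 2) := if_pos hr.le
  refine ⟨contDiff_one_iff_deriv.2 ⟨fun s => (hasDerivAt_g hk s).differentiableAt,
    hderiv ▸ continuous_gDeriv hk⟩, ⟨?_, ?_⟩, strictAntiOn_g hk, strictMonoOn_g hk⟩
  · rw [hderiv, hjunction]
    exact hasDerivAt_sqrt_one_sub_mul_sq k (one_sub_mul_sq_pos hk hr.le)
  · rw [hderiv, hjunction, neg_mul_div_sqrt_eq (mul_sq_eq_of_abs_eq hk hr)]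
    exact hasDerivAt_one_div_mul_sq_add _ (mul_pos bet_pos hk).ne'
      (by have := seven_lt_alph; positivity)
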